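/- arXiv:1512.08165 — 3 statements merged into one kernel-verified Lean document; each statement's English description precedes it below -/
import Mathlib

section
/- Let w ∈ F satisfy w̃ = w⁻¹ and let ρ : F → SL(2,ℂ) be any group homomorphism with tr ρ(a) = tr ρ(b). Then tr ρ(wa) = tr ρ(bw), tr ρ(wab⁻¹) = tr ρ(bwa⁻¹), and tr ρ(wb⁻¹) = tr ρ(wa⁻¹). Consequently, among the four trace conditions tr ρ(wa)−tr ρ(bw), tr ρ(w)−tr ρ(bwa⁻¹), tr ρ(wab⁻¹)−tr ρ(w), tr ρ(wb⁻¹)−tr ρ(wa⁻¹), all vanish as soon as tr ρ(bwa⁻¹) − tr ρ(w) = 0. -/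
open Matrix

/-- The free group on two generators `a, b` (indexed by `Fin 2`). -/
abbrev F2 := FreeGroup (Fin 2)

/-- The generator `a`. -/
def ga : F2 := FreeGroup.of 0

/-- The generator `b`. -/
def gb : F2 := FreeGroup.of 1

/-- The homomorphism `u ↦ ũ` sending `a ↦ b⁻¹` and `b ↦ a⁻¹`. -/
def tilde : F2 →* F2 := FreeGroup.lift ![gb⁻¹, ga⁻¹]

abbrev SL2C := Matrix.SpecialLinearGroup (Fin 2) ℂ

/-! ### Auxiliary lemmas -/

abbrev M2 := Matrix (Fin 2) (Fin 2) ℂ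

/-- Polarized Cayley–Hamilton for 2×2 matrices (no determinant hypothesis needed). -/
lemma polarizedCH (X Y : M2) :
    Y * X = (trace Y) • X + (trace X) • Y - X * Y + (trace (X*Y) - trace X * trace Y) • 1 := by
  ext i j
  fin_cases i <;> fin_cases j <;>
    simp [Matrix.mul_apply, Matrix.trace_fin_two, Fin.sum_univ_succ, Matrix.one_apply] <;> ring

/-- Cayley–Hamilton for elements of `SL(2,ℂ)`. -/
lemma sl2_sq (A : SL2C) : (A : M2) * A = (trace (A : M2)) • (A : M2) - 1 := by
  have hd : det (A : M2) = 1 := A.2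
  rw [det_fin_two] at hd
  ext i j
  fin_cases i <;> fin_cases j <;>
    simp [Matrix.mul_apply, Matrix.trace_fin_two, Fin.sum_univ_succ, Matrix.one_apply] <;>
    first
      | ring1
      | linear_combination -hd
      | linear_combination (-2)*hd
      | linear_combination hd
      | linear_combination 2*hd

lemma sl2_inv (A : SL2C) : ((A⁻¹ : SL2C) : M2) = (trace (A : M2)) • 1 - A := by
  rw [Matrix.SpecialLinearGroup.coe_inv, Matrix.adjugate_fin_two]
  ext i j
  fin_cases i <;> fin_cases j <;>
    simp [Matrix.trace_fin_two, Matrix.one_apply]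

lemma sl2_trace_inv (A : SL2C) : trace ((A⁻¹ : SL2C) : M2) = trace (A : M2) := by
  rw [sl2_inv]
  simp [Matrix.trace_fin_two, Matrix.one_apply]
  ring

/-- Multiplication rule for the span of `{1, X, Y, XY}`, with structure constants depending
only on `x = tr X`, `y = tr Y`, `z = tr XY`. -/
lemma prod_expand (X Y : M2) (x y z : ℂ)
    (hYX : Y * X = y • X + x • Y - X * Y + (z - x * y) • 1)
    (hXX : X * X = x • X - 1) (hYY : Y * Y = y • Y - 1)
    (p q r s p' q' r' s' : ℂ) :
    (p • (1:M2) + q • X + r • Y + s • (X*Y)) * (p' • 1 + q' • X + r' • Y + s' • (X*Y))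
    = (p*p' - q*q' + r*q'*(z-x*y) - r*r' - r*s'*x - s*q'*y - s*s') • 1
    + (p*q' + q*p' + q*q'*x + r*q'*y + r*s' + s*q'*z - s*r') • X
    + (p*r' - q*s' + r*p' + r*q'*x + r*r'*y + r*s'*z + s*q') • Y
    + (p*s' + q*r' + q*s'*x - r*q' + s*p' + s*r'*y + s*s'*z) • (X*Y) := by
  have hXXY : X*(X*Y) = x • (X*Y) - Y := by
    rw [← mul_assoc, hXX, sub_mul, smul_mul_assoc, one_mul]
  have hXYY : (X*Y)*Y = y • (X*Y) - X := by
    rw [mul_assoc, hYY, mul_sub, mul_smul_comm, mul_one]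
  have hYXY : Y*(X*Y) = X + z • Y - x • 1 := by
    rw [← mul_assoc, hYX, add_mul, sub_mul, add_mul, smul_mul_assoc, smul_mul_assoc,
      smul_mul_assoc, one_mul, hYY, hXYY]
    module
  have hXYX : (X*Y)*X = z • X + Y - y • 1 := by
    rw [mul_assoc, hYX, mul_add, mul_sub, mul_add, mul_smul_comm, mul_smul_comm,
      mul_smul_comm, mul_one, hXX, hXXY]
    module
  have hXYXY : (X*Y)*(X*Y) = z • (X*Y) - 1 := by
    rw [← mul_assoc, hXYX, sub_mul, add_mul, smul_mul_assoc, smul_mul_assoc, one_mul, hYY]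
    module
  simp only [add_mul, mul_add, smul_mul_assoc, mul_smul_comm, one_mul, mul_one,
    hXX, hYY, hYX, hXXY, hXYY, hYXY, hXYX, hXYXY]
  module

/-- Fricke-type rigidity: two representations of `F2` into `SL(2,ℂ)` with the same traces
on `a`, `b`, `ab` have the same traces everywhere. -/
lemma key_traces (ρ₁ ρ₂ : F2 →* SL2C)
    (h1 : trace (ρ₁ ga : M2) = trace (ρ₂ ga : M2))
    (h2 : trace (ρ₁ gb : M2) = trace (ρ₂ gb : M2))
    (h3 : trace (ρ₁ (ga * gb) : M2) = trace (ρ₂ (ga * gb) : M2)) (u : F2) :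
    trace (ρ₁ u : M2) = trace (ρ₂ u : M2) := by
  set X : M2 := (ρ₁ ga : M2) with hX
  set Y : M2 := (ρ₁ gb : M2) with hY
  set X' : M2 := (ρ₂ ga : M2) with hX'
  set Y' : M2 := (ρ₂ gb : M2) with hY'
  have hXY1 : (ρ₁ (ga * gb) : M2) = X * Y := by
    rw [_root_.map_mul, Matrix.SpecialLinearGroup.coe_mul]
  have hXY2 : (ρ₂ (ga * gb) : M2) = X' * Y' := by
    rw [_root_.map_mul, Matrix.SpecialLinearGroup.coe_mul]
  have hx' : trace X' = trace X := h1.symm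
  have hy' : trace Y' = trace Y := h2.symm
  have hz' : trace (X' * Y') = trace (X * Y) := by rw [← hXY2, ← h3, hXY1]
  have hXX : X * X = trace X • X - 1 := sl2_sq (ρ₁ ga)
  have hYY : Y * Y = trace Y • Y - 1 := sl2_sq (ρ₁ gb)
  have hXX' : X' * X' = trace X • X' - 1 := by rw [← hx']; exact sl2_sq (ρ₂ ga)
  have hYY' : Y' * Y' = trace Y • Y' - 1 := by rw [← hy']; exact sl2_sq (ρ₂ gb)
  have hYX : Y * X = trace Y • X + trace X • Y - X * Y
      + (trace (X * Y) - trace X * trace Y) • 1 := polarizedCH X Y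
  have hYX' : Y' * X' = trace Y • X' + trace X • Y' - X' * Y'
      + (trace (X * Y) - trace X * trace Y) • 1 := by
    have := polarizedCH X' Y'; rwa [hx', hy', hz'] at this
  have hC : ∀ u : F2, ∃ p q r s : ℂ,
      (ρ₁ u : M2) = p • 1 + q • X + r • Y + s • (X*Y) ∧
      (ρ₂ u : M2) = p • 1 + q • X' + r • Y' + s • (X'*Y') := by
    intro u
    induction u using FreeGroup.induction_on with
    | C1 =>
      exact ⟨1, 0, 0, 0, by simp, by simp⟩
    | of i =>
      fin_cases i
      · refine ⟨0, 1, 0, 0, ?_, ?_⟩ <;>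
        · simp only [zero_smul, one_smul, zero_add, add_zero]
          first | exact hX.symm | exact hX'.symm
      · refine ⟨0, 0, 1, 0, ?_, ?_⟩ <;>
        · simp only [zero_smul, one_smul, zero_add, add_zero]
          first | exact hY.symm | exact hY'.symm
    | inv_of i _ =>
      fin_cases i
      · refine ⟨trace X, -1, 0, 0, ?_, ?_⟩
        · rw [_root_.map_inv]
          have h := sl2_inv (ρ₁ ga)
          rw [← hX] at h
          exact h.trans (by module)
        · rw [_root_.map_inv]
          have h := sl2_inv (ρ₂ ga)
          rw [← hX', hx'] at h
          exact h.trans (by module)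
      · refine ⟨trace Y, 0, -1, 0, ?_, ?_⟩
        · rw [_root_.map_inv]
          have h := sl2_inv (ρ₁ gb)
          rw [← hY] at h
          exact h.trans (by module)
        · rw [_root_.map_inv]
          have h := sl2_inv (ρ₂ gb)
          rw [← hY', hy'] at h
          exact h.trans (by module)
    | mul u v hu hv =>
      obtain ⟨p, q, r, s, hu1, hu2⟩ := hu
      obtain ⟨p', q', r', s', hv1, hv2⟩ := hv
      set x : ℂ := trace X
      set y : ℂ := trace Y
      set z : ℂ := trace (X * Y)
      refine ⟨p*p' - q*q' + r*q'*(z-x*y) - r*r' - r*s'*x - s*q'*y - s*s',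
        p*q' + q*p' + q*q'*x + r*q'*y + r*s' + s*q'*z - s*r',
        p*r' - q*s' + r*p' + r*q'*x + r*r'*y + r*s'*z + s*q',
        p*s' + q*r' + q*s'*x - r*q' + s*p' + s*r'*y + s*s'*z, ?_, ?_⟩
      · rw [_root_.map_mul, Matrix.SpecialLinearGroup.coe_mul, hu1, hv1]
        exact prod_expand X Y x y z hYX hXX hYY p q r s p' q' r' s'
      · rw [_root_.map_mul, Matrix.SpecialLinearGroup.coe_mul, hu2, hv2]
        exact prod_expand X' Y' x y z hYX' hXX' hYY' p q r s p' q' r' s'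
  obtain ⟨p, q, r, s, hu1, hu2⟩ := hC u
  rw [hu1, hu2]
  simp only [trace_add, trace_smul, trace_one, smul_eq_mul, hx', hy', hz']

lemma tilde_ga : tilde ga = gb⁻¹ := by
  rw [tilde, ga, FreeGroup.lift_apply_of]
  simp

lemma tilde_gb : tilde gb = ga⁻¹ := by
  rw [tilde, gb, FreeGroup.lift_apply_of]
  simp

theorem stmt3 (ρ : F2 →* SL2C)
    (htr : Matrix.trace (ρ ga : Matrix (Fin 2) (Fin 2) ℂ)
         = Matrix.trace (ρ gb : Matrix (Fin 2) (Fin 2) ℂ))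
    (w : F2) (hwt : tilde w = w⁻¹) :
    Matrix.trace (ρ (w * ga) : Matrix (Fin 2) (Fin 2) ℂ)
      = Matrix.trace (ρ (gb * w) : Matrix (Fin 2) (Fin 2) ℂ) ∧
    Matrix.trace (ρ (w * ga * gb⁻¹) : Matrix (Fin 2) (Fin 2) ℂ)
      = Matrix.trace (ρ (gb * w * ga⁻¹) : Matrix (Fin 2) (Fin 2) ℂ) ∧
    Matrix.trace (ρ (w * gb⁻¹) : Matrix (Fin 2) (Fin 2) ℂ)
      = Matrix.trace (ρ (w * ga⁻¹) : Matrix (Fin 2) (Fin 2) ℂ) ∧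
    (Matrix.trace (ρ (gb * w * ga⁻¹) : Matrix (Fin 2) (Fin 2) ℂ)
        - Matrix.trace (ρ w : Matrix (Fin 2) (Fin 2) ℂ) = 0 →
      Matrix.trace (ρ (w * ga) : Matrix (Fin 2) (Fin 2) ℂ)
        - Matrix.trace (ρ (gb * w) : Matrix (Fin 2) (Fin 2) ℂ) = 0 ∧
      Matrix.trace (ρ w : Matrix (Fin 2) (Fin 2) ℂ)
        - Matrix.trace (ρ (gb * w * ga⁻¹) : Matrix (Fin 2) (Fin 2) ℂ) = 0 ∧
      Matrix.trace (ρ (w * ga * gb⁻¹) : Matrix (Fin 2) (Fin 2) ℂ)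
        - Matrix.trace (ρ w : Matrix (Fin 2) (Fin 2) ℂ) = 0 ∧
      Matrix.trace (ρ (w * gb⁻¹) : Matrix (Fin 2) (Fin 2) ℂ)
        - Matrix.trace (ρ (w * ga⁻¹) : Matrix (Fin 2) (Fin 2) ℂ) = 0) := by
  -- traces are invariant under `tilde`
  have hkey : ∀ u : F2, trace ((ρ.comp tilde) u : M2) = trace (ρ u : M2) := by
    apply key_traces
    · rw [MonoidHom.comp_apply, tilde_ga, _root_.map_inv, sl2_trace_inv, htr]
    · rw [MonoidHom.comp_apply, tilde_gb, _root_.map_inv, sl2_trace_inv]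
      exact htr
    · have e : tilde (ga * gb) = (ga * gb)⁻¹ := by
        rw [_root_.map_mul, tilde_ga, tilde_gb]; group
      rw [MonoidHom.comp_apply, e, _root_.map_inv, sl2_trace_inv]
  -- cyclic invariance of trace, at the group level
  have hcyc : ∀ u v : F2, trace (ρ (u * v) : M2) = trace (ρ (v * u) : M2) := by
    intro u v
    rw [_root_.map_mul, _root_.map_mul, Matrix.SpecialLinearGroup.coe_mul,
      Matrix.SpecialLinearGroup.coe_mul, Matrix.trace_mul_comm]
  have G1 : trace (ρ (w * ga) : M2) = trace (ρ (gb * w) : M2) := by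
    have h := hkey (w * ga)
    have e : tilde (w * ga) = (gb * w)⁻¹ := by
      rw [_root_.map_mul, tilde_ga, hwt]; group
    rw [MonoidHom.comp_apply, e, _root_.map_inv, sl2_trace_inv] at h
    exact h.symm
  have G2 : trace (ρ (w * ga * gb⁻¹) : M2) = trace (ρ (gb * w * ga⁻¹) : M2) := by
    have h := hkey (w * ga * gb⁻¹)
    have e : tilde (w * ga * gb⁻¹) = (ga⁻¹ * (gb * w))⁻¹ := by
      rw [_root_.map_mul, _root_.map_mul, _root_.map_inv, tilde_ga, tilde_gb, hwt]; group
    rw [MonoidHom.comp_apply, e, _root_.map_inv, sl2_trace_inv,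
      hcyc ga⁻¹ (gb * w)] at h
    exact h.symm
  have G3 : trace (ρ (w * gb⁻¹) : M2) = trace (ρ (w * ga⁻¹) : M2) := by
    have h := hkey (w * gb⁻¹)
    have e : tilde (w * gb⁻¹) = (ga⁻¹ * w)⁻¹ := by
      rw [_root_.map_mul, _root_.map_inv, tilde_gb, hwt]; group
    rw [MonoidHom.comp_apply, e, _root_.map_inv, sl2_trace_inv, hcyc ga⁻¹ w] at h
    exact h.symm
  refine ⟨G1, G2, G3, fun h => ⟨by rw [G1]; ring, by linear_combination -h, by
    rw [G2]; linear_combination h, by rw [G3]; ring⟩⟩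
end

section
/- Let m ≥ 0 be an integer and let w = (ba⁻¹)^m·b·a·(b⁻¹a)^m in F. Then tr ρ(w) = (M² + M⁻² + 2 − z) − (z − 2)(z − M² − M⁻²)·S_m(z)·S_{m−1}(z). -/
open Matrix

lemma pow_cheb (z : ℂ) (S : ℤ → ℂ → ℂ)
    (hSm1 : S (-1) z = 0) (hSm2 : S (-2) z = -1)
    (hSrec : ∀ (j : ℤ), S j z = z * S (j - 1) z - S (j - 2) z)
    (X : Matrix (Fin 2) (Fin 2) ℂ) (hX : X * X = z • X - 1) :
    ∀ n : ℕ, X ^ n = S ((n : ℤ) - 1) z • X - S ((n : ℤ) - 2) z • 1 := by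
  intro n
  induction n with
  | zero => simp [hSm1, hSm2]
  | succ k ih =>
    have h1 : ((k : ℤ) + 1) - 1 = k := by ring
    have h2 : ((k : ℤ) + 1) - 2 = k - 1 := by ring
    rw [pow_succ, ih, sub_mul, smul_mul_assoc, smul_mul_assoc, hX, one_mul,
      smul_sub, smul_smul]
    push_cast [h1, h2]
    rw [hSrec (k : ℤ)]
    module

theorem stmt13
    (M z : ℂ) (hM : M ≠ 0)
    (S : ℤ → ℂ → ℂ)
    (hS0 : ∀ x : ℂ, S 0 x = 1) (hS1 : ∀ x : ℂ, S 1 x = x)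
    (hSrec : ∀ (j : ℤ) (x : ℂ), S j x = x * S (j - 1) x - S (j - 2) x)
    (ρ : F2 →* SL2C)
    (ha : (ρ ga : Matrix (Fin 2) (Fin 2) ℂ) = !![M, 1; 0, M⁻¹])
    (hb : (ρ gb : Matrix (Fin 2) (Fin 2) ℂ) = !![M, 0; 2 - z, M⁻¹])
    (m : ℤ) (hm : 0 ≤ m)
    (w : F2) (hw : w = (gb * ga⁻¹) ^ m * gb * ga * (gb⁻¹ * ga) ^ m) :
    Matrix.trace (ρ w : Matrix (Fin 2) (Fin 2) ℂ)
      = (M ^ 2 + M⁻¹ ^ 2 + 2 - z)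
        - (z - 2) * (z - M ^ 2 - M⁻¹ ^ 2) * S m z * S (m - 1) z := by
  have hMi : M * M⁻¹ = 1 := mul_inv_cancel₀ hM
  -- special values
  have hSm1 : S (-1) z = 0 := by
    have h := hSrec 1 z
    norm_num [hS0, hS1] at h
    linear_combination h
  have hSm2 : S (-2) z = -1 := by
    have h := hSrec 0 z
    norm_num [hS0, hSm1] at h
    linear_combination h
  -- matrices
  set A : Matrix (Fin 2) (Fin 2) ℂ := !![1, -M; (2 - z) * M⁻¹, z - 1] with hA
  set C : Matrix (Fin 2) (Fin 2) ℂ := !![1, M⁻¹; (z - 2) * M, z - 1] with hC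
  have hAeq : (ρ (gb * ga⁻¹) : Matrix (Fin 2) (Fin 2) ℂ) = A := by
    have hainv : (ρ ga⁻¹ : Matrix (Fin 2) (Fin 2) ℂ) = !![M⁻¹, -1; 0, M] := by
      rw [map_inv]
      rw [Matrix.SpecialLinearGroup.coe_inv, Matrix.adjugate_fin_two, ha]
      norm_num
    rw [_root_.map_mul, Matrix.SpecialLinearGroup.coe_mul, hb, hainv, hA]
    ext i j
    fin_cases i <;> fin_cases j
    all_goals simp [Matrix.mul_apply, Fin.sum_univ_two]
    all_goals try field_simp
    all_goals try ring
  have hCeq : (ρ (gb⁻¹ * ga) : Matrix (Fin 2) (Fin 2) ℂ) = C := by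
    have hbinv : (ρ gb⁻¹ : Matrix (Fin 2) (Fin 2) ℂ) = !![M⁻¹, 0; -(2 - z), M] := by
      rw [map_inv]
      rw [Matrix.SpecialLinearGroup.coe_inv, Matrix.adjugate_fin_two, hb]
      norm_num
    rw [_root_.map_mul, Matrix.SpecialLinearGroup.coe_mul, hbinv, ha, hC]
    ext i j
    fin_cases i <;> fin_cases j
    all_goals simp [Matrix.mul_apply, Fin.sum_univ_two]
    all_goals try field_simp
    all_goals try ring
  have hA2 : A * A = z • A - 1 := by
    rw [hA]
    ext i j
    fin_cases i <;> fin_cases j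
    all_goals simp [Matrix.mul_apply, Fin.sum_univ_two, Matrix.one_apply,
      Matrix.smul_apply, Matrix.sub_apply, smul_eq_mul]
    all_goals try field_simp
    all_goals try ring
  have hC2 : C * C = z • C - 1 := by
    rw [hC]
    ext i j
    fin_cases i <;> fin_cases j
    all_goals simp [Matrix.mul_apply, Fin.sum_univ_two, Matrix.one_apply,
      Matrix.smul_apply, Matrix.sub_apply, smul_eq_mul]
    all_goals try field_simp
    all_goals try ring
  obtain ⟨n, rfl⟩ := Int.eq_ofNat_of_zero_le hm
  have hpowA : (ρ ((gb * ga⁻¹) ^ (n : ℤ)) : Matrix (Fin 2) (Fin 2) ℂ)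
      = S ((n : ℤ) - 1) z • A - S ((n : ℤ) - 2) z • 1 := by
    rw [zpow_natCast, map_pow, Matrix.SpecialLinearGroup.coe_pow, hAeq]
    exact pow_cheb z S hSm1 hSm2 (fun j => hSrec j z) A hA2 n
  have hpowC : (ρ ((gb⁻¹ * ga) ^ (n : ℤ)) : Matrix (Fin 2) (Fin 2) ℂ)
      = S ((n : ℤ) - 1) z • C - S ((n : ℤ) - 2) z • 1 := by
    rw [zpow_natCast, map_pow, Matrix.SpecialLinearGroup.coe_pow, hCeq]
    exact pow_cheb z S hSm1 hSm2 (fun j => hSrec j z) C hC2 n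
  set p := S ((n : ℤ) - 1) z
  set q := S ((n : ℤ) - 2) z
  have hSn : S (n : ℤ) z = z * p - q := hSrec (n : ℤ) z
  have hdet : p ^ 2 - z * p * q + q ^ 2 = 1 := by
    have h := (ρ ((gb * ga⁻¹) ^ (n : ℤ))).2
    rw [hpowA, hA] at h
    simp [Matrix.det_fin_two, Matrix.smul_apply, Matrix.sub_apply,
      Matrix.one_apply, smul_eq_mul] at h
    field_simp at h
    have h2 : M * (p ^ 2 - z * p * q + q ^ 2) = M * 1 := by linear_combination M * h
    have := mul_left_cancel₀ hM h2
    linear_combination this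
  rw [hw, _root_.map_mul, _root_.map_mul, _root_.map_mul, Matrix.SpecialLinearGroup.coe_mul,
    Matrix.SpecialLinearGroup.coe_mul, Matrix.SpecialLinearGroup.coe_mul,
    hpowA, hpowC, ha, hb, hSn, hA, hC]
  rw [Matrix.trace_fin_two]
  simp [Matrix.mul_apply, Fin.sum_univ_two, Matrix.one_apply,
    Matrix.smul_apply, Matrix.sub_apply, smul_eq_mul]
  field_simp
  linear_combination (M ^ 4 + 2 * M ^ 2 - M ^ 2 * z + 1) * hdet
end

section
/- Let m ≥ 1 and n be integers and let w = (ba⁻¹)^m·(b⁻¹a)^m in F. Set t̄_m = 2 + (z − 2)(z − M² − M⁻²)·S_{m−1}(z)² and d̄_m = 1 + (z − M² − M⁻²)·S_{m−1}(z)·(S_m(z) − S_{m−1}(z)). Then, writing ρ(wⁿ) = [[W₁₁, W₁₂], [W₂₁, W₂₂]], one has W₁₁ − (M − M⁻¹)W₁₂ = S_n(t̄_m) − d̄_m·S_{n−1}(t̄_m); moreover, if n ≠ 0, then ρ(wⁿ)ρ(a) = ρ(b)ρ(wⁿ) if and only if S_n(t̄_m) − d̄_m·S_{n−1}(t̄_m)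 = 0 (this is the Riley polynomial Φ_{J(2m,2n)}(M,z) of the double twist knot J(2m,2n)). -/
open Matrix

lemma fin_two_sq (A : Matrix (Fin 2) (Fin 2) ℂ) (h : A.det = 1) :
    A * A = A.trace • A - 1 := by
  rw [Matrix.det_fin_two] at h
  rw [Matrix.trace_fin_two]
  ext i j
  fin_cases i <;> fin_cases j <;>
    simp [Matrix.mul_apply, Fin.sum_univ_two, Matrix.one_apply] <;>
    first | linear_combination -h | ring

lemma sl2_inv_s17 (g : Matrix.SpecialLinearGroup (Fin 2) ℂ) :
    ((g⁻¹ : Matrix.SpecialLinearGroup (Fin 2) ℂ) : Matrix (Fin 2) (Fin 2) ℂ)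
      = (g : Matrix (Fin 2) (Fin 2) ℂ).trace • 1 - g := by
  rw [Matrix.SpecialLinearGroup.coe_inv, Matrix.adjugate_fin_two, Matrix.trace_fin_two]
  ext i j
  fin_cases i <;> fin_cases j <;> simp [Matrix.one_apply]

lemma sl2_zpow (S : ℤ → ℂ → ℂ)
    (hS0 : ∀ x : ℂ, S 0 x = 1) (hS1 : ∀ x : ℂ, S 1 x = x)
    (hSrec : ∀ (j : ℤ) (x : ℂ), S j x = x * S (j - 1) x - S (j - 2) x)
    (g : Matrix.SpecialLinearGroup (Fin 2) ℂ) (t : ℂ)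
    (ht : (g : Matrix (Fin 2) (Fin 2) ℂ).trace = t) (n : ℤ) :
    ((g ^ n : Matrix.SpecialLinearGroup (Fin 2) ℂ) : Matrix (Fin 2) (Fin 2) ℂ)
      = S (n - 1) t • (g : Matrix (Fin 2) (Fin 2) ℂ) - S (n - 2) t • 1 := by
  have hdet : (g : Matrix (Fin 2) (Fin 2) ℂ).det = 1 := g.2
  have hsq := fin_two_sq (g : Matrix (Fin 2) (Fin 2) ℂ) hdet
  rw [ht] at hsq
  have hinv := sl2_inv_s17 g
  rw [ht] at hinv
  have hm1 : S (-1) t = 0 := by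
    have h := hSrec 1 t
    norm_num [hS0, hS1] at h
    linear_combination h
  have hm2 : S (-2) t = -1 := by
    have h := hSrec 0 t
    norm_num [hS0, hm1] at h
    linear_combination h
  induction n using Int.induction_on with
  | zero => norm_num [hm1, hm2]
  | succ k ih =>
      have e : g ^ ((k : ℤ) + 1) = g ^ (k : ℤ) * g := zpow_add_one g k
      have e1 : (k : ℤ) + 1 - 1 = (k : ℤ) := by ring
      have e2 : (k : ℤ) + 1 - 2 = (k : ℤ) - 1 := by ring
      rw [e, Matrix.SpecialLinearGroup.coe_mul, ih, e1, e2, hSrec (k : ℤ) t,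
        sub_mul, smul_mul_assoc, smul_mul_assoc, hsq, one_mul]
      module
  | pred k ih =>
      have e : g ^ (-(k : ℤ) - 1) = g ^ (-(k : ℤ)) * g⁻¹ :=
        _root_.zpow_sub_one g (-(k : ℤ))
      have h3 : S (-(k : ℤ) - 1 - 2) t
          = t * S (-(k : ℤ) - 2) t - S (-(k : ℤ) - 1) t := by
        have h := hSrec (-(k : ℤ) - 1) t
        have e4 : -(k : ℤ) - 1 - 1 = -(k : ℤ) - 2 := by ring
        have e5 : -(k : ℤ) - 1 - 2 = -(k : ℤ) - 3 := by ring
        rw [e4, e5] at h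
        have e6 : -(k : ℤ) - 1 - 2 = -(k : ℤ) - 3 := by ring
        rw [e6]
        linear_combination h
      have e7 : -(k : ℤ) - 1 - 1 = -(k : ℤ) - 2 := by ring
      rw [e, Matrix.SpecialLinearGroup.coe_mul, ih, hinv, e7, h3]
      simp only [sub_mul, mul_sub, smul_mul_assoc, mul_smul_comm, one_mul, mul_one]
      rw [hsq]
      module

lemma cheb_ident (S : ℤ → ℂ → ℂ)
    (hS0 : ∀ x : ℂ, S 0 x = 1) (hS1 : ∀ x : ℂ, S 1 x = x)
    (hSrec : ∀ (j : ℤ) (x : ℂ), S j x = x * S (j - 1) x - S (j - 2) x)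
    (x : ℂ) (k : ℤ) :
    S k x ^ 2 - x * S k x * S (k - 1) x + S (k - 1) x ^ 2 = 1 := by
  have hm1 : S (-1) x = 0 := by
    have h := hSrec 1 x
    norm_num [hS0, hS1] at h
    linear_combination h
  induction k using Int.induction_on with
  | zero => norm_num [hS0, hm1]
  | succ k ih =>
      have hr := hSrec ((k : ℤ) + 1) x
      have e1 : (k : ℤ) + 1 - 1 = (k : ℤ) := by ring
      have e2 : (k : ℤ) + 1 - 2 = (k : ℤ) - 1 := by ring
      rw [e1, e2] at hr
      rw [e1]
      linear_combination ih + (S ((k : ℤ) + 1) x - S ((k : ℤ) - 1) x) * hr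
  | pred k ih =>
      have hr := hSrec (-(k : ℤ)) x
      have e1 : -(k : ℤ) - 1 - 1 = -(k : ℤ) - 2 := by ring
      rw [e1]
      linear_combination ih + (S (-(k : ℤ) - 2) x - S (-(k : ℤ)) x) * hr

theorem stmt17
    (M z : ℂ) (hM : M ≠ 0)
    (S : ℤ → ℂ → ℂ)
    (hS0 : ∀ x : ℂ, S 0 x = 1) (hS1 : ∀ x : ℂ, S 1 x = x)
    (hSrec : ∀ (j : ℤ) (x : ℂ), S j x = x * S (j - 1) x - S (j - 2) x)
    (ρ : F2 →* SL2C)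
    (ha : (ρ ga : Matrix (Fin 2) (Fin 2) ℂ) = !![M, 1; 0, M⁻¹])
    (hb : (ρ gb : Matrix (Fin 2) (Fin 2) ℂ) = !![M, 0; 2 - z, M⁻¹])
    (m n : ℤ) (hm : 1 ≤ m)
    (w : F2) (hw : w = (gb * ga⁻¹) ^ m * (gb⁻¹ * ga) ^ m)
    (tbar dbar : ℂ)
    (htbar : tbar = 2 + (z - 2) * (z - M ^ 2 - M⁻¹ ^ 2) * S (m - 1) z ^ 2)
    (hdbar : dbar = 1 + (z - M ^ 2 - M⁻¹ ^ 2) * S (m - 1) z * (S m z - S (m - 1) z)) :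
    (ρ (w ^ n) : Matrix (Fin 2) (Fin 2) ℂ) 0 0
        - (M - M⁻¹) * (ρ (w ^ n) : Matrix (Fin 2) (Fin 2) ℂ) 0 1
      = S n tbar - dbar * S (n - 1) tbar ∧
    (n ≠ 0 →
      (ρ (w ^ n) * ρ ga = ρ gb * ρ (w ^ n) ↔ S n tbar - dbar * S (n - 1) tbar = 0)) := by
  have hMM : M * M⁻¹ = 1 := mul_inv_cancel₀ hM
  -- inverses of the generators
  have hainv : (ρ ga⁻¹ : Matrix (Fin 2) (Fin 2) ℂ) = !![M⁻¹, -1; 0, M] := by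
    rw [map_inv, sl2_inv_s17, ha, Matrix.trace_fin_two]
    ext i j
    fin_cases i <;> fin_cases j <;> simp [Matrix.one_apply] <;> ring
  have hbinv : (ρ gb⁻¹ : Matrix (Fin 2) (Fin 2) ℂ) = !![M⁻¹, 0; z - 2, M] := by
    rw [map_inv, sl2_inv_s17, hb, Matrix.trace_fin_two]
    ext i j
    fin_cases i <;> fin_cases j <;> simp [Matrix.one_apply] <;> ring
  -- the two basic products
  have hP : (ρ (gb * ga⁻¹) : Matrix (Fin 2) (Fin 2) ℂ)
      = !![1, -M; (2 - z) * M⁻¹, z - 1] := by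
    rw [_root_.map_mul, Matrix.SpecialLinearGroup.coe_mul, hb, hainv]
    ext i j
    fin_cases i <;> fin_cases j <;>
      simp [Matrix.mul_apply, Fin.sum_univ_two] <;>
      first | linear_combination hMM | linear_combination -hMM | ring
  have hQ : (ρ (gb⁻¹ * ga) : Matrix (Fin 2) (Fin 2) ℂ)
      = !![1, M⁻¹; (z - 2) * M, z - 1] := by
    rw [_root_.map_mul, Matrix.SpecialLinearGroup.coe_mul, hbinv, ha]
    ext i j
    fin_cases i <;> fin_cases j <;>
      simp [Matrix.mul_apply, Fin.sum_univ_two] <;>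
      first | linear_combination hMM | linear_combination -hMM | ring
  have htP : (ρ (gb * ga⁻¹) : Matrix (Fin 2) (Fin 2) ℂ).trace = z := by
    rw [hP]; simp [Matrix.trace_fin_two]; try ring
  have htQ : (ρ (gb⁻¹ * ga) : Matrix (Fin 2) (Fin 2) ℂ).trace = z := by
    rw [hQ]; simp [Matrix.trace_fin_two]; try ring
  have hPm : (ρ ((gb * ga⁻¹) ^ m) : Matrix (Fin 2) (Fin 2) ℂ)
      = S (m - 1) z • !![1, -M; (2 - z) * M⁻¹, z - 1] - S (m - 2) z • 1 := by
    rw [map_zpow, sl2_zpow S hS0 hS1 hSrec _ z htP m, hP]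
  have hQm : (ρ ((gb⁻¹ * ga) ^ m) : Matrix (Fin 2) (Fin 2) ℂ)
      = S (m - 1) z • !![1, M⁻¹; (z - 2) * M, z - 1] - S (m - 2) z • 1 := by
    rw [map_zpow, sl2_zpow S hS0 hS1 hSrec _ z htQ m, hQ]
  -- the explicit matrix of ρ w
  have hW : (ρ w : Matrix (Fin 2) (Fin 2) ℂ) =
      !![(S (m-1) z - S (m-2) z)^2 - S (m-1) z^2 * M^2 * (z-2),
         (S (m-1) z - S (m-2) z) * S (m-1) z * M⁻¹
           - S (m-1) z * M * (S (m-1) z * (z-1) - S (m-2) z);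
         S (m-1) z * (2-z) * M⁻¹ * (S (m-1) z - S (m-2) z)
           + (S (m-1) z * (z-1) - S (m-2) z) * S (m-1) z * (z-2) * M,
         S (m-1) z * (2-z) * M⁻¹ * (S (m-1) z * M⁻¹)
           + (S (m-1) z * (z-1) - S (m-2) z)^2] := by
    rw [hw, _root_.map_mul, Matrix.SpecialLinearGroup.coe_mul, hPm, hQm]
    ext i j
    fin_cases i <;> fin_cases j <;>
      simp [Matrix.mul_apply, Fin.sum_univ_two, Matrix.one_apply] <;> ring
  -- Chebyshev identity at k = m - 1
  have hident : S (m-1) z ^ 2 - z * S (m-1) z * S (m-2) z + S (m-2) z ^ 2 = 1 := by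
    have h := cheb_ident S hS0 hS1 hSrec z (m - 1)
    have e : m - 1 - 1 = m - 2 := by ring
    rw [e] at h
    exact h
  have hSm : S m z = z * S (m-1) z - S (m-2) z := hSrec m z
  -- trace of ρ w
  have htr : (ρ w : Matrix (Fin 2) (Fin 2) ℂ).trace = tbar := by
    rw [hW, htbar]
    simp [Matrix.trace_fin_two]
    linear_combination 2 * hident
  -- the corner-entry identity
  have hc : ((S (m-1) z - S (m-2) z)^2 - S (m-1) z^2 * M^2 * (z-2))
      - (M - M⁻¹) * ((S (m-1) z - S (m-2) z) * S (m-1) z * M⁻¹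
           - S (m-1) z * M * (S (m-1) z * (z-1) - S (m-2) z))
      = tbar - dbar := by
    rw [htbar, hdbar, hSm]
    linear_combination hident + (2 * S (m-1) z * S (m-2) z - z * S (m-1) z ^ 2) * hMM
  -- the symmetry identity w10 = (2 - z) * w01
  have hkey : S (m-1) z * (2-z) * M⁻¹ * (S (m-1) z - S (m-2) z)
           + (S (m-1) z * (z-1) - S (m-2) z) * S (m-1) z * (z-2) * M
      = (2 - z) * ((S (m-1) z - S (m-2) z) * S (m-1) z * M⁻¹
           - S (m-1) z * M * (S (m-1) z * (z-1) - S (m-2) z)) := by ring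
  -- explicit matrix of ρ (w ^ n)
  have hWn : (ρ (w ^ n) : Matrix (Fin 2) (Fin 2) ℂ)
      = S (n - 1) tbar • (ρ w : Matrix (Fin 2) (Fin 2) ℂ) - S (n - 2) tbar • 1 := by
    rw [map_zpow]
    exact sl2_zpow S hS0 hS1 hSrec (ρ w) tbar htr n
  rw [hW] at hWn
  have key : (ρ (w ^ n) : Matrix (Fin 2) (Fin 2) ℂ) 0 0
        - (M - M⁻¹) * (ρ (w ^ n) : Matrix (Fin 2) (Fin 2) ℂ) 0 1
      = S n tbar - dbar * S (n - 1) tbar := by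
    rw [hWn]
    simp only [Matrix.sub_apply, Matrix.smul_apply, Matrix.one_apply, Matrix.cons_val',
      Matrix.cons_val_zero, Matrix.cons_val_one, Matrix.head_cons, Matrix.head_fin_const,
      Matrix.empty_val', Matrix.cons_val_fin_one]
    norm_num
    linear_combination S (n-1) tbar * hc - hSrec n tbar
  refine ⟨key, fun hn => ?_⟩
  constructor
  · intro heq
    rw [← key]
    have hmat : ((ρ (w ^ n) * ρ ga : SL2C) : Matrix (Fin 2) (Fin 2) ℂ)
        = ((ρ gb * ρ (w ^ n) : SL2C) : Matrix (Fin 2) (Fin 2) ℂ) := by rw [heq]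
    rw [Matrix.SpecialLinearGroup.coe_mul, Matrix.SpecialLinearGroup.coe_mul, ha, hb,
      hWn] at hmat
    have h01 := congrFun (congrFun hmat 0) 1
    simp [Matrix.mul_apply, Fin.sum_univ_two, Matrix.one_apply] at h01
    rw [hWn]
    simp only [Matrix.sub_apply, Matrix.smul_apply, Matrix.one_apply, Matrix.cons_val',
      Matrix.cons_val_zero, Matrix.cons_val_one, Matrix.head_cons, Matrix.head_fin_const,
      Matrix.empty_val', Matrix.cons_val_fin_one]
    norm_num
    linear_combination h01
  · intro hphi
    have hv := key.trans hphi
    rw [hWn] at hv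
    simp only [Matrix.sub_apply, Matrix.smul_apply, Matrix.one_apply, Matrix.cons_val',
      Matrix.cons_val_zero, Matrix.cons_val_one, Matrix.head_cons, Matrix.head_fin_const,
      Matrix.empty_val', Matrix.cons_val_fin_one] at hv
    norm_num at hv
    apply Matrix.SpecialLinearGroup.ext
    intro i j
    have hcoe : ∀ (g h : SL2C) (i j : Fin 2),
        (g * h) i j = ((g : Matrix (Fin 2) (Fin 2) ℂ) * (h : Matrix (Fin 2) (Fin 2) ℂ)) i j := by
      intro g h i j
      rw [← Matrix.SpecialLinearGroup.coe_mul]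
    rw [hcoe, hcoe, ha, hb, hWn]
    fin_cases i <;> fin_cases j
    · simp [Matrix.mul_apply, Fin.sum_univ_two, Matrix.one_apply]; try ring
    · simp [Matrix.mul_apply, Fin.sum_univ_two, Matrix.one_apply]
      linear_combination hv
    · simp [Matrix.mul_apply, Fin.sum_univ_two, Matrix.one_apply]
      linear_combination (M - M⁻¹) * S (n-1) tbar * hkey - (2 - z) * hv
    · simp [Matrix.mul_apply, Fin.sum_univ_two, Matrix.one_apply]
      linear_combination S (n-1) tbar * hkey
end
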